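/- Let L ⊆ M be number fields with L totally real and [M : L] = 2, and suppose M admits at least one ring homomorphism M → ℝ (i.e., M has a real embedding). Then there exists a unit x of 𝒪_M such that N_{M/L}(x) = 1 and x has infinite order in the unit group (x^k ≠ 1 for every integer k ≥ 1). -/

import Mathlib

/-!
By Dirichlet's unit theorem the unit rank of a totally real field `L` of degree `n` is
`n - 1`. If `M ⊇ L` is quadratic with `r₁` real and `r₂` complex places, then
`r₁ + 2 r₂ = 2n`, so `r₁` is even, and a real place forces `r₁ ≥ 2`; hence `r₁ + r₂ ≥ n + 1`
and the unit rank of `M` is at least `n`. The norm `𝒪_Mˣ → 𝒪_Lˣ` therefore cannot have a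
torsion kernel.
-/

open NumberField Module InfinitePlace

theorem MonoidHom.exists_map_eq_one_not_isOfFinOrder {G H : Type*} [CommGroup G] [CommGroup H]
    [Module.Finite ℤ (Additive G)] [Module.Finite ℤ (Additive H)] (f : G →* H)
    (h : finrank ℤ (Additive H) < finrank ℤ (Additive G)) :
    ∃ x : G, f x = 1 ∧ ¬IsOfFinOrder x := by
  let φ := (MonoidHom.toAdditive f).toIntLinearMap
  have hker : finrank ℤ (LinearMap.ker φ) ≠ 0 := by
    have := (LinearMap.ker φ).finrank_quotient_add_finrank
    have := φ.quotKerEquivRange.finrank_eq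
    have := Submodule.finrank_le (LinearMap.range φ)
    omega
  obtain ⟨⟨x, hx⟩, hfin⟩ : ∃ x : LinearMap.ker φ, ¬IsOfFinAddOrder x := by
    simpa [Module.finrank_eq_zero_iff_isTorsion, ← isAddTorsion_iff_isTorsion_int,
      IsAddTorsion] using hker
  refine ⟨x.toMul, hx, fun hx' => hfin ?_⟩
  exact AddSubmonoid.isOfFinAddOrder_coe.mp
    ((isOfFinAddOrder_ofMul_iff (x := x.toMul)).mpr hx')

theorem NumberField.isTotallyReal_of_forall_im_eq_zero {K : Type*} [Field K]
    (h : ∀ (σ : K →+* ℂ) (y : K), (σ y).im = 0) : IsTotallyReal K where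
  isReal _ := isReal_iff.mpr <| RingHom.ext fun y => Complex.conj_eq_iff_im.mpr (h _ y)

theorem NumberField.ComplexEmbedding.isReal_ofRealHom_comp {K : Type*} [Field K]
    (ρ : K →+* ℝ) : ComplexEmbedding.IsReal (Complex.ofRealHom.comp ρ) :=
  RingHom.ext fun x => Complex.conj_ofReal (ρ x)

theorem NumberField.InfinitePlace.nrRealPlaces_pos_of_nonempty_ringHom_real {K : Type*} [Field K]
    [NumberField K] (h : Nonempty (K →+* ℝ)) : 0 < nrRealPlaces K := by
  classical
  obtain ⟨ρ⟩ := h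
  exact Fintype.card_pos_iff.mpr
    ⟨⟨mk _, isReal_mk_iff.mpr (ComplexEmbedding.isReal_ofRealHom_comp ρ)⟩⟩

theorem NumberField.Units.rank_lt_rank_of_finrank_eq_two {L M : Type*} [Field L] [NumberField L]
    [IsTotallyReal L] [Field M] [NumberField M] [Algebra L M] (hdeg : finrank L M = 2)
    (hM : 0 < nrRealPlaces M) : Units.rank L < Units.rank M := by
  have hL : Fintype.card (InfinitePlace L) = finrank ℚ L := by
    rw [card_eq_nrRealPlaces_add_nrComplexPlaces, IsTotallyReal.nrComplexPlaces_eq_zero,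
      add_zero, IsTotallyReal.finrank]
  have hM₂ : finrank ℚ M = finrank ℚ L * 2 := by
    rw [← hdeg, finrank_mul_finrank]
  have := card_eq_nrRealPlaces_add_nrComplexPlaces M
  have := card_add_two_mul_card_eq_rank M
  have : 0 < finrank ℚ L := finrank_pos
  unfold Units.rank
  omega

/-- Lemma `min2`(2), reformulated.  Let `L ⊆ M` be number fields with `L`
totally real and `[M : L] = 2`, and suppose `M` has a real embedding.  Then there is a unit
`x` of `𝒪_M` with `N_{M/L}(x) = 1` of infinite order. -/
theorem stmt_12 (L M : Type*) [Field L] [NumberField L] [Field M] [NumberField M]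
    [Algebra L M]
    (htr : ∀ (σ : L →+* ℂ) (y : L), (σ y).im = 0)
    (hdeg : Module.finrank L M = 2)
    (hreal : Nonempty (M →+* ℝ)) :
    ∃ x : (𝓞 M)ˣ, Algebra.norm L (algebraMap (𝓞 M) M (x : 𝓞 M)) = 1 ∧
      ∀ k : ℕ, 1 ≤ k → x ^ k ≠ 1 := by
  have := isTotallyReal_of_forall_im_eq_zero htr
  have hrank : finrank ℤ (Additive (𝓞 L)ˣ) < finrank ℤ (Additive (𝓞 M)ˣ) := by
    rw [Units.finrank_eq, Units.finrank_eq]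
    exact Units.rank_lt_rank_of_finrank_eq_two hdeg
      (nrRealPlaces_pos_of_nonempty_ringHom_real hreal)
  obtain ⟨x, hnorm, hfin⟩ := MonoidHom.exists_map_eq_one_not_isOfFinOrder
    (Units.map (RingOfIntegers.norm L : 𝓞 M →* 𝓞 L)) hrank
  exact ⟨x, congrArg (fun u : (𝓞 L)ˣ => ((u : 𝓞 L) : L)) hnorm,
    fun k hk hxk => hfin (isOfFinOrder_iff_pow_eq_one.mpr ⟨k, hk, hxk⟩)⟩
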